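/- arXiv:2311.16358 — 5 statements merged into one kernel-verified Lean document; each statement's English description precedes it below -/
import Mathlib

section
/- As σ → 1/2⁺, the sum over primes ∑_p p^{-2σ} is asymptotic to log(1/(2σ-1)); that is, the limit as σ → 1/2⁺ of (∑_p p^{-2σ}) / log(1/(2σ-1)) equals 1. -/
/-!
Write `P(s) = ∑ₚ p^(-s)` for `s > 1`. Taking logarithms in the Euler product,
`log ζ(s) = ∑ₚ -log (1 - p^(-s))`, and since `0 ≤ -log (1 - x) - x ≤ 2x²` for `x ≤ 1/2`,
`log ζ(s) - P(s)` is bounded by `2 ∑ₚ p^(-2)`. The simple pole of `ζ` at `1` gives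
`log ζ(s) = log (1/(s - 1)) + o(1)` as `s → 1⁺`, so `P(s) = log (1/(s - 1)) + O(1)`, and the
right side tends to infinity. Substitute `s = 2σ`.
-/

open Filter Topology Asymptotics Real

lemma Real.self_le_neg_log_one_sub {x : ℝ} (hx : x < 1) : x ≤ -log (1 - x) := by
  linarith [log_le_sub_one_of_pos (sub_pos.2 hx)]

lemma Real.neg_log_one_sub_sub_self_le {x : ℝ} (hx : x ≤ 1 / 2) :
    -log (1 - x) - x ≤ 2 * x ^ 2 := by
  have hpos : 0 < 1 - x := by linarith
  have hinv : (1 - x)⁻¹ ≤ 1 + x + 2 * x ^ 2 :=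
    (inv_le_iff_one_le_mul₀ hpos).2 (by nlinarith [sq_nonneg x])
  linarith [one_sub_inv_le_log_of_pos hpos]

lemma Nat.Primes.rpow_neg_le_half (p : Nat.Primes) {s : ℝ} (hs : 1 ≤ s) :
    (p : ℝ) ^ (-s) ≤ 1 / 2 := by
  have hp : (2 : ℝ) ≤ p := by exact_mod_cast p.prop.two_le
  calc (p : ℝ) ^ (-s) ≤ (p : ℝ) ^ (-1 : ℝ) :=
        rpow_le_rpow_of_exponent_le (by linarith) (by linarith)
    _ ≤ 1 / 2 := by
        rw [rpow_neg_one, one_div]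
        exact inv_anti₀ two_pos hp

lemma Nat.Primes.rpow_neg_sq_le (p : Nat.Primes) {s : ℝ} (hs : 1 ≤ s) :
    ((p : ℝ) ^ (-s)) ^ 2 ≤ (p : ℝ) ^ (-2 : ℝ) := by
  have hp : (1 : ℝ) ≤ p := by exact_mod_cast p.prop.one_le
  rw [← rpow_mul_natCast (by linarith)]
  exact rpow_le_rpow_of_exponent_le hp (by push_cast; linarith)

lemma abs_tsum_neg_log_one_sub_sub_tsum_le {ι : Type*} {x c : ι → ℝ}
    (hx : ∀ i, x i ≤ 1 / 2) (hxc : ∀ i, x i ^ 2 ≤ c i) (hx_sum : Summable x)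
    (hc_sum : Summable c) :
    |∑' i, -log (1 - x i) - ∑' i, x i| ≤ 2 * ∑' i, c i := by
  have hlower i : 0 ≤ -log (1 - x i) - x i := by
    linarith [self_le_neg_log_one_sub (show x i < 1 by linarith [hx i])]
  have hupper i : -log (1 - x i) - x i ≤ 2 * c i := by
    linarith [neg_log_one_sub_sub_self_le (hx i), hxc i]
  have hsum : Summable fun i ↦ -log (1 - x i) - x i :=
    (hc_sum.mul_left 2).of_nonneg_of_le hlower hupper
  have hlog_sum : Summable fun i ↦ -log (1 - x i) := by simpa using hsum.add hx_sum
  rw [← hlog_sum.tsum_sub hx_sum, abs_of_nonneg (tsum_nonneg hlower), ← tsum_mul_left]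
  exact hsum.tsum_le_tsum hupper (hc_sum.mul_left 2)

lemma log_re_riemannZeta_eq_tsum {s : ℝ} (hs : 1 < s) :
    log (riemannZeta s).re = ∑' p : Nat.Primes, -log (1 - (p : ℝ) ^ (-s)) := by
  have hterm (p : Nat.Primes) : -Complex.log (1 - (p : ℂ) ^ (-(s : ℂ))) =
      ((-log (1 - (p : ℝ) ^ (-s)) : ℝ) : ℂ) := by
    have hpos : 0 ≤ 1 - (p : ℝ) ^ (-s) := by linarith [p.rpow_neg_le_half hs.le]
    rw [Complex.ofReal_neg, Complex.ofReal_log hpos, Complex.ofReal_sub, Complex.ofReal_one,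
      Complex.ofReal_cpow (Nat.cast_nonneg _), Complex.ofReal_neg, Complex.ofReal_natCast]
  have h := riemannZeta_eulerProduct_exp_log (s := s) (by simpa using hs)
  rw [tsum_congr hterm, ← Complex.ofReal_tsum, ← Complex.ofReal_exp] at h
  rw [← h, Complex.ofReal_re, log_exp]

lemma Asymptotics.IsBigO.isEquivalent_of_tendsto_atTop {α : Type*} {l : Filter α}
    {f g : α → ℝ} (hfg : (f - g) =O[l] fun _ ↦ (1 : ℝ)) (hg : Tendsto g l atTop) :
    f ~[l] g :=
  hfg.trans_isLittleO ((isLittleO_one_left_iff ℝ).2 (tendsto_norm_atTop_atTop.comp hg))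

lemma isBigO_tsum_prime_rpow_sub_log_riemannZeta :
    (fun s : ℝ ↦ ∑' p : Nat.Primes, (p : ℝ) ^ (-s) - log (riemannZeta s).re) =O[𝓝[>] 1]
      fun _ ↦ (1 : ℝ) := by
  refine IsBigO.of_bound (2 * ∑' p : Nat.Primes, (p : ℝ) ^ (-2 : ℝ)) ?_
  filter_upwards [self_mem_nhdsWithin] with s (hs : 1 < s)
  rw [norm_one, mul_one, norm_sub_rev, Real.norm_eq_abs, log_re_riemannZeta_eq_tsum hs]
  exact abs_tsum_neg_log_one_sub_sub_tsum_le (fun p ↦ p.rpow_neg_le_half hs.le)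
    (fun p ↦ p.rpow_neg_sq_le hs.le) (Nat.Primes.summable_rpow.2 (by linarith))
    (Nat.Primes.summable_rpow.2 (by norm_num))

lemma tendsto_log_one_div_sub_one_nhdsGT :
    Tendsto (fun s : ℝ ↦ log (1 / (s - 1))) (𝓝[>] 1) atTop := by
  have hsub : Tendsto (fun s : ℝ ↦ s - 1) (𝓝[>] 1) (𝓝[>] 0) := by
    convert (continuous_sub_right (1 : ℝ)).continuousWithinAt.tendsto_nhdsWithin
      (s := Set.Ioi 1) (t := Set.Ioi 0) fun s (hs : 1 < s) ↦ show 0 < s - 1 by linarith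
    norm_num
  simpa only [one_div, Function.comp_def] using
    tendsto_log_atTop.comp (tendsto_inv_nhdsGT_zero.comp hsub)

lemma tsum_prime_rpow_isEquivalent_log :
    (fun s : ℝ ↦ ∑' p : Nat.Primes, (p : ℝ) ^ (-s)) ~[𝓝[>] 1] fun s ↦ log (1 / (s - 1)) := by
  refine IsBigO.isEquivalent_of_tendsto_atTop ?_ tendsto_log_one_div_sub_one_nhdsGT
  refine (isBigO_tsum_prime_rpow_sub_log_riemannZeta.add
    log_riemannZeta_add_log_sub_isLittleO_ofReal.isBigO).congr_left fun s ↦ ?_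
  simp only [Pi.sub_apply, one_div, log_inv]
  ring

theorem stmt_1 :
    Filter.Tendsto
      (fun σ : ℝ => (∑' p : Nat.Primes, (p : ℝ) ^ (-(2 * σ))) / Real.log (1 / (2 * σ - 1)))
      (nhdsWithin (1/2) (Set.Ioi (1/2))) (nhds 1) := by
  have hdouble : Tendsto (fun σ : ℝ ↦ 2 * σ) (𝓝[>] (1 / 2)) (𝓝[>] 1) := by
    convert (continuous_const_mul (2 : ℝ)).continuousWithinAt.tendsto_nhdsWithin
      (s := Set.Ioi (1 / 2)) (t := Set.Ioi 1) fun σ (hσ : 1 / 2 < σ) ↦ show 1 < 2 * σ by linarith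
    norm_num
  have hne : ∀ᶠ s : ℝ in 𝓝[>] 1, log (1 / (s - 1)) ≠ 0 :=
    tendsto_log_one_div_sub_one_nhdsGT.eventually_ne_atTop 0
  exact ((isEquivalent_iff_tendsto_one hne).1 tsum_prime_rpow_isEquivalent_log).comp hdouble
end

section
/- Let 0 < δ < 1 and define σ_ℓ = 1/2 + 1/(2·exp(ℓ^{1-δ})) for positive integers ℓ. Then there exists ℓ₁ such that for all ℓ ≥ ℓ₁, σ_{ℓ-1} - σ_ℓ ≤ (2σ_ℓ - 1)/ℓ^δ. -/
/-!
Write `a = (ℓ-1)^(1-δ)` and `b = ℓ^(1-δ)`. Then `σ_{ℓ-1} - σ_ℓ = (e^{-a} - e^{-b})/2` and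
`2σ_ℓ - 1 = e^{-b}`, so it suffices that `e^{b-a} - 1 ≤ 2ℓ^{-δ}`. Concavity of `t ↦ t^(1-δ)`
gives `b - a ≤ (1-δ)(ℓ-1)^{-δ}`, which is at most `ℓ^{-δ} ≤ 1` as soon as `δℓ ≥ 1`, and
`e^x - 1 ≤ 2x` on `[0, 1]`.
-/

open Real

lemma rpow_add_one_sub_rpow_le {x p : ℝ} (hx : 0 < x) (hp0 : 0 ≤ p) (hp1 : p ≤ 1) :
    (x + 1) ^ p - x ^ p ≤ p * x ^ (p - 1) := by
  have hbern : (1 + x⁻¹) ^ p ≤ 1 + p * x⁻¹ :=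
    rpow_one_add_le_one_add_mul_self (by linarith [inv_pos.2 hx]) hp0 hp1
  have hsplit : (x + 1) ^ p = x ^ p * (1 + x⁻¹) ^ p := by
    rw [← mul_rpow hx.le (by positivity), mul_add, mul_inv_cancel₀ hx.ne', mul_one]
  rw [hsplit, rpow_sub_one hx.ne', div_eq_mul_inv]
  linear_combination mul_le_mul_of_nonneg_left hbern (rpow_nonneg hx.le p)

lemma one_sub_mul_rpow_le_sub_one_rpow {δ L : ℝ} (hδ0 : 0 < δ) (hδ1 : δ ≤ 1)
    (hδL : 1 ≤ δ * L) : (1 - δ) * L ^ δ ≤ (L - 1) ^ δ := by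
  have hL : 1 ≤ L := by nlinarith
  have hL0 : 0 < L := by linarith
  have hratio : 1 - δ ≤ (L - 1) / L := by
    rw [le_div_iff₀ hL0]; linarith
  have hpow : (L - 1) / L ≤ ((L - 1) / L) ^ δ :=
    self_le_rpow_of_le_one (by positivity) (by rw [div_le_one hL0]; linarith) hδ1
  rw [div_rpow (by linarith) hL0.le, le_div_iff₀ (rpow_pos_of_pos hL0 δ)] at hpow
  exact le_trans (mul_le_mul_of_nonneg_right hratio (rpow_nonneg hL0.le δ)) hpow

lemma rpow_one_sub_sub_rpow_one_sub_le {δ L : ℝ} (hδ0 : 0 < δ) (hδ1 : δ < 1)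
    (hδL : 1 ≤ δ * L) : L ^ (1 - δ) - (L - 1) ^ (1 - δ) ≤ (L ^ δ)⁻¹ := by
  have hL : 1 < L := by nlinarith
  have hincr := rpow_add_one_sub_rpow_le (x := L - 1) (p := 1 - δ) (by linarith)
    (by linarith) (by linarith)
  rw [sub_add_cancel, sub_sub_cancel_left, rpow_neg (by linarith)] at hincr
  refine hincr.trans ?_
  rw [← div_eq_mul_inv, div_le_iff₀ (rpow_pos_of_pos (by linarith) δ), inv_mul_eq_div,
    le_div_iff₀ (rpow_pos_of_pos (by linarith) δ)]
  exact one_sub_mul_rpow_le_sub_one_rpow hδ0 hδ1.le hδL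

lemma exp_neg_sub_exp_neg_le {a b : ℝ} (hab : a ≤ b) (hba : b - a ≤ 1) :
    exp (-a) - exp (-b) ≤ 2 * (b - a) * exp (-b) := by
  have hexp : exp (b - a) - 1 ≤ 2 * (b - a) := by
    have hab' : |b - a| = b - a := abs_of_nonneg (sub_nonneg.2 hab)
    have := abs_exp_sub_one_le (x := b - a) (by rwa [hab'])
    rw [hab'] at this
    exact (le_abs_self _).trans this
  have hsplit : exp (-a) = exp (b - a) * exp (-b) := by rw [← exp_add]; ring_nf
  rw [hsplit]
  nlinarith [exp_pos (-b)]

/-- `σ_ℓ` of the statement, at a real argument. -/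
noncomputable def sigma (δ x : ℝ) : ℝ := 1 / 2 + 1 / (2 * exp (x ^ (1 - δ)))

lemma sigma_sub_one_sub_sigma_le {δ L : ℝ} (hδ0 : 0 < δ) (hδ1 : δ < 1) (hδL : 1 ≤ δ * L) :
    sigma δ (L - 1) - sigma δ L ≤ (2 * sigma δ L - 1) / L ^ δ := by
  set a := (L - 1) ^ (1 - δ)
  set b := L ^ (1 - δ)
  have hL : 1 < L := by nlinarith
  have hgap : b - a ≤ (L ^ δ)⁻¹ := rpow_one_sub_sub_rpow_one_sub_le hδ0 hδ1 hδL
  have hab : a ≤ b := rpow_le_rpow (by linarith) (by linarith) (by linarith)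
  have hgap_le_one : (L ^ δ)⁻¹ ≤ 1 := inv_le_one_of_one_le₀ (one_le_rpow hL.le hδ0.le)
  have hdiff : sigma δ (L - 1) - sigma δ L = (exp (-a) - exp (-b)) / 2 := by
    simp only [sigma, exp_neg]; ring
  have hrhs : (2 * sigma δ L - 1) / L ^ δ = (L ^ δ)⁻¹ * exp (-b) := by
    simp only [sigma, exp_neg]; ring
  rw [hdiff, hrhs]
  nlinarith [exp_neg_sub_exp_neg_le hab (hgap.trans hgap_le_one), exp_pos (-b)]

theorem stmt_3 (δ : ℝ) (hδ0 : 0 < δ) (hδ1 : δ < 1) :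
    ∃ ℓ₁ : ℕ, ∀ ℓ : ℕ, ℓ₁ ≤ ℓ → 2 ≤ ℓ →
      (1/2 + 1/(2 * Real.exp ((ℓ - 1 : ℕ) ^ (1 - δ)))) -
        (1/2 + 1/(2 * Real.exp ((ℓ : ℝ) ^ (1 - δ))))
      ≤ (2 * (1/2 + 1/(2 * Real.exp ((ℓ : ℝ) ^ (1 - δ)))) - 1) / (ℓ : ℝ) ^ δ := by
  refine ⟨⌈1 / δ⌉₊, fun ℓ hℓ hℓ2 => ?_⟩
  have hδℓ : 1 ≤ δ * ℓ := by
    have : 1 / δ ≤ ℓ := (Nat.le_ceil _).trans (by exact_mod_cast hℓ)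
    rwa [div_le_iff₀ hδ0, mul_comm] at this
  rw [Nat.cast_sub (by omega), Nat.cast_one]
  exact sigma_sub_one_sub_sigma_le hδ0 hδ1 hδℓ
end

section
/- Let 0 < δ < 1 and σ_ℓ = 1/2 + 1/(2·exp(ℓ^{1-δ})). Then (∑_p p^{-2σ_ℓ}) / ℓ^{1-δ} → 1 as ℓ → ∞; that is, ∑_p p^{-2σ_ℓ} ~ ℓ^{1-δ}. -/
open Filter Real Topology

noncomputable def myHom (s : ℝ) (hs : s ≠ 0) : ℕ →*₀ ℝ where
  toFun n := (n : ℝ) ^ (-s)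
  map_zero' := by simp [Real.zero_rpow (neg_ne_zero.mpr hs)]
  map_one' := by simp
  map_mul' m n := by
    push_cast
    exact Real.mul_rpow (Nat.cast_nonneg m) (Nat.cast_nonneg n)

@[simp] lemma myHom_apply (s : ℝ) (hs : s ≠ 0) (n : ℕ) : myHom s hs n = (n : ℝ) ^ (-s) := rfl

noncomputable def myK : ℝ := 2 * ∑' p : Nat.Primes, ((p : ℕ) : ℝ) ^ (-(2:ℝ))

lemma log_ineq (x : ℝ) (hx0 : 0 < x) (hx : x ≤ 1/2) :
    x ≤ -Real.log (1 - x) ∧ -Real.log (1 - x) ≤ x + 2 * x^2 := by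
  have h1x : (0:ℝ) < 1 - x := by linarith
  constructor
  · have := Real.log_le_sub_one_of_pos h1x
    linarith
  · rw [← Real.log_inv]
    have h2 := Real.log_le_sub_one_of_pos (inv_pos.mpr h1x)
    have h3 : (1 - x)⁻¹ ≤ 1 + x + 2*x^2 := by
      rw [inv_le_iff_one_le_mul₀ h1x]
      nlinarith
    linarith

lemma key (s : ℝ) (h1 : 1 < s) (h2 : s ≤ 2) :
    (∑' p : Nat.Primes, ((p:ℕ):ℝ) ^ (-s)) ≤ Real.log (∑' n : ℕ, (n:ℝ) ^ (-s)) ∧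
    Real.log (∑' n : ℕ, (n:ℝ) ^ (-s)) ≤ (∑' p : Nat.Primes, ((p:ℕ):ℝ) ^ (-s)) + myK ∧
    0 < ∑' n : ℕ, (n:ℝ) ^ (-s) := by
  have hs : s ≠ 0 := by linarith
  set x : Nat.Primes → ℝ := fun p => ((p:ℕ):ℝ) ^ (-s) with hxdef
  have hp1 : ∀ p : Nat.Primes, (1:ℝ) ≤ ((p:ℕ):ℝ) := fun p => by
    exact_mod_cast p.prop.one_lt.le
  have hp2 : ∀ p : Nat.Primes, (2:ℝ) ≤ ((p:ℕ):ℝ) := fun p => by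
    exact_mod_cast p.prop.two_le
  have hx0 : ∀ p, 0 < x p := fun p =>
    Real.rpow_pos_of_pos (by linarith [hp2 p]) _
  have hxhalf : ∀ p, x p ≤ 1/2 := by
    intro p
    have h := Real.rpow_le_rpow_of_exponent_le (hp1 p) (by linarith : -s ≤ -1)
    rw [Real.rpow_neg_one] at h
    have h2' : ((p:ℕ):ℝ)⁻¹ ≤ 2⁻¹ := inv_anti₀ (by norm_num) (hp2 p)
    calc x p ≤ ((p:ℕ):ℝ)⁻¹ := h
    _ ≤ 1/2 := by rw [one_div]; exact h2'
  have hx2 : ∀ p, x p ^ 2 ≤ ((p:ℕ):ℝ) ^ (-(2:ℝ)) := by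
    intro p
    have e1 : x p ^ 2 = ((p:ℕ):ℝ) ^ (-s * 2) := by
      rw [Real.rpow_mul (by linarith [hp2 p] : (0:ℝ) ≤ ((p:ℕ):ℝ))]
      rw [Real.rpow_two]
    rw [e1]
    exact Real.rpow_le_rpow_of_exponent_le (hp1 p) (by linarith)
  have hsumN : Summable (fun n : ℕ => (n:ℝ) ^ (-s)) :=
    Real.summable_nat_rpow.mpr (by linarith)
  have hsumP : Summable x := hsumN.comp_injective Subtype.coe_injective
  have hsum2 : Summable (fun p : Nat.Primes => ((p:ℕ):ℝ) ^ (-(2:ℝ))) :=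
    (Real.summable_nat_rpow.mpr (by norm_num : -(2:ℝ) < -1)).comp_injective Subtype.coe_injective
  set g : Nat.Primes → ℝ := fun p => -Real.log (1 - x p) with hgdef
  have hgb : ∀ p, x p ≤ g p ∧ g p ≤ x p + 2 * ((p:ℕ):ℝ) ^ (-(2:ℝ)) := by
    intro p
    obtain ⟨hl, hr⟩ := log_ineq (x p) (hx0 p) (hxhalf p)
    exact ⟨hl, hr.trans (by nlinarith [hx2 p])⟩
  have hgsum : Summable g :=
    Summable.of_nonneg_of_le (fun p => le_trans (hx0 p).le (hgb p).1)
      (fun p => (hgb p).2) (hsumP.add (hsum2.mul_left 2))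
  have hprod : HasProd (fun p : Nat.Primes => (1 - x p)⁻¹) (∑' n : ℕ, (n:ℝ) ^ (-s)) := by
    have hsumnorm : Summable (fun n => ‖myHom s hs n‖) := by
      simp only [myHom_apply, Real.norm_of_nonneg (Real.rpow_nonneg (Nat.cast_nonneg _) _)]
      exact hsumN
    have := EulerProduct.eulerProduct_completely_multiplicative_hasProd hsumnorm
    simpa only [myHom_apply] using this
  have hexpprod : HasProd (fun p : Nat.Primes => (1 - x p)⁻¹) (Real.exp (∑' p, g p)) := by
    have := hgsum.hasSum.rexp
    refine this.congr_fun fun p => ?_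
    have h1x : (0:ℝ) < 1 - x p := by linarith [hxhalf p]
    simp only [Function.comp_apply, hgdef, Real.exp_neg, Real.exp_log h1x]
  have hZeq : Real.exp (∑' p, g p) = ∑' n : ℕ, (n:ℝ) ^ (-s) := hexpprod.unique hprod
  have hZpos : 0 < ∑' n : ℕ, (n:ℝ) ^ (-s) := hZeq ▸ Real.exp_pos _
  have hlogZ : Real.log (∑' n : ℕ, (n:ℝ) ^ (-s)) = ∑' p, g p := by
    rw [← hZeq, Real.log_exp]
  refine ⟨?_, ?_, hZpos⟩
  · rw [hlogZ]
    exact Summable.tsum_le_tsum (fun p => (hgb p).1) hsumP hgsum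
  · rw [hlogZ]
    calc ∑' p, g p ≤ ∑' p, (x p + 2 * ((p:ℕ):ℝ) ^ (-(2:ℝ))) :=
          Summable.tsum_le_tsum (fun p => (hgb p).2) hgsum (hsumP.add (hsum2.mul_left 2))
    _ = (∑' p, x p) + 2 * ∑' p : Nat.Primes, ((p:ℕ):ℝ) ^ (-(2:ℝ)) := by
          rw [Summable.tsum_add hsumP (hsum2.mul_left 2), tsum_mul_left]
    _ = (∑' p, x p) + myK := rfl

theorem stmt_8 (δ : ℝ) (hδ0 : 0 < δ) (hδ1 : δ < 1) :
    Filter.Tendsto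
      (fun ℓ : ℕ =>
        (∑' p : Nat.Primes, (p : ℝ) ^ (-(2 * (1/2 + 1/(2 * Real.exp ((ℓ : ℝ) ^ (1 - δ))))))) /
          (ℓ : ℝ) ^ (1 - δ))
      Filter.atTop (nhds 1) := by
  have h1δ : (0:ℝ) < 1 - δ := by linarith
  set a : ℕ → ℝ := fun ℓ => (ℓ:ℝ) ^ (1 - δ) with ha
  have ha_top : Tendsto a atTop atTop :=
    (tendsto_rpow_atTop h1δ).comp tendsto_natCast_atTop_atTop
  set s : ℕ → ℝ := fun ℓ => 1 + Real.exp (-(a ℓ)) with hsdef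
  have hs1 : ∀ ℓ, 1 < s ℓ := fun ℓ => by
    have := Real.exp_pos (-(a ℓ)); simp only [hsdef]; linarith
  have hs2 : ∀ ℓ, s ℓ ≤ 2 := fun ℓ => by
    have h0 : 0 ≤ a ℓ := Real.rpow_nonneg (Nat.cast_nonneg _) _
    have := Real.exp_le_one_iff.mpr (by linarith : -(a ℓ) ≤ 0)
    simp only [hsdef]; linarith
  have hfun : ∀ ℓ : ℕ,
      (∑' p : Nat.Primes, (p : ℝ) ^ (-(2 * (1/2 + 1/(2 * Real.exp ((ℓ:ℝ) ^ (1 - δ))))))) =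
        ∑' p : Nat.Primes, ((p:ℕ):ℝ) ^ (-(s ℓ)) := by
    intro ℓ
    refine tsum_congr fun p => ?_
    congr 1
    have he := Real.exp_ne_zero (a ℓ)
    simp only [hsdef, Real.exp_neg]
    field_simp
    ring
  -- limit of (s-1) Z(s)
  have hmem : Tendsto s atTop (𝓝[>] 1) := by
    refine tendsto_nhdsWithin_of_tendsto_nhds_of_eventually_within _ ?_
      (Eventually.of_forall fun ℓ => hs1 ℓ)
    have h1 : Tendsto (fun ℓ => Real.exp (-(a ℓ))) atTop (𝓝 0) :=
      Real.tendsto_exp_atBot.comp (tendsto_neg_atTop_atBot.comp ha_top)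
    have := tendsto_const_nhds.add h1 (f := fun _ : ℕ => (1:ℝ))
    simpa using this
  have hZlim : Tendsto (fun ℓ => (s ℓ - 1) * ∑' n : ℕ, (n:ℝ) ^ (-(s ℓ))) atTop (𝓝 1) := by
    have := tendsto_sub_mul_tsum_nat_rpow.comp hmem
    refine this.congr fun ℓ => ?_
    simp only [Function.comp_apply]
    congr 1
    exact tsum_congr fun n => by rw [Real.rpow_neg (Nat.cast_nonneg n), one_div]
  have hlog : Tendsto (fun ℓ => Real.log ((s ℓ - 1) * ∑' n : ℕ, (n:ℝ) ^ (-(s ℓ))))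
      atTop (𝓝 0) := by
    have := hZlim.log one_ne_zero
    simpa using this
  set c : ℕ → ℝ := fun ℓ => Real.log ((s ℓ - 1) * ∑' n : ℕ, (n:ℝ) ^ (-(s ℓ))) with hcdef
  have hkey := fun ℓ => key (s ℓ) (hs1 ℓ) (hs2 ℓ)
  have hcid : ∀ ℓ, c ℓ = -(a ℓ) + Real.log (∑' n : ℕ, (n:ℝ) ^ (-(s ℓ))) := by
    intro ℓ
    have hs1' : s ℓ - 1 ≠ 0 := by have := hs1 ℓ; linarith
    rw [hcdef]
    beta_reduce
    rw [Real.log_mul hs1' (ne_of_gt (hkey ℓ).2.2)]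
    congr 1
    have : s ℓ - 1 = Real.exp (-(a ℓ)) := by simp [hsdef]
    rw [this, Real.log_exp]
  -- squeeze
  have hlow : Tendsto (fun ℓ => (c ℓ - myK) / a ℓ + 1) atTop (𝓝 1) := by
    have := Tendsto.div_atTop (hlog.sub_const myK) ha_top
    have h2 := this.add_const 1
    simpa using h2
  have hup : Tendsto (fun ℓ => c ℓ / a ℓ + 1) atTop (𝓝 1) := by
    have := Tendsto.div_atTop hlog ha_top
    have h2 := this.add_const 1
    simpa using h2
  refine tendsto_of_tendsto_of_tendsto_of_le_of_le' hlow hup ?_ ?_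
  · filter_upwards [eventually_ge_atTop 1] with ℓ hℓ
    have hapos : 0 < a ℓ :=
      Real.rpow_pos_of_pos (by exact_mod_cast Nat.lt_of_lt_of_le Nat.zero_lt_one hℓ) _
    have hPge : c ℓ + a ℓ - myK ≤ ∑' p : Nat.Primes, ((p:ℕ):ℝ) ^ (-(s ℓ)) := by
      have h := (hkey ℓ).2.1
      have h2 := hcid ℓ
      linarith
    rw [hfun ℓ, div_add_one hapos.ne']
    rw [div_le_div_iff_of_pos_right hapos]
    linarith
  · filter_upwards [eventually_ge_atTop 1] with ℓ hℓ
    have hapos : 0 < a ℓ :=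
      Real.rpow_pos_of_pos (by exact_mod_cast Nat.lt_of_lt_of_le Nat.zero_lt_one hℓ) _
    have hPle : (∑' p : Nat.Primes, ((p:ℕ):ℝ) ^ (-(s ℓ))) ≤ c ℓ + a ℓ := by
      have h := (hkey ℓ).1
      have h2 := hcid ℓ
      linarith
    rw [hfun ℓ, div_add_one hapos.ne']
    rw [div_le_div_iff_of_pos_right hapos]
    linarith
end

section
/- (Dyadic chaining) Let F : [a, b] → ℝ be continuous, and suppose that for every r ≥ 1 and every 0 ≤ n < 2^r, |F(a + (n+1)(b-a)/2^r) - F(a + n(b-a)/2^r)| ≤ λ_r, where λ_r ≥ 0 with ∑_r λ_r < ∞. Then for every σ ∈ [a, b], |F(σ) - F(a)| ≤ 2 ∑_{r=1}^∞ λ_r. -/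
/-!
Write `x_{r,n} = a + n (b - a) / 2^r`. Since `x_{r+1,2n} = x_{r,n}`, any dyadic point `x_{r,n}` with
`n < 2^r` is reached from `a` by descending the binary digits of `n`, crossing at most one step of
each level `k ≤ r`; hence `|F(x_{r,n}) - F(a)| ≤ λ_1 + ⋯ + λ_r`. Every `σ ∈ [a, b]` is a limit of
such points (with `n < 2^r`), and continuity of `F` passes the bound `∑ λ_r` to `σ`.
-/

open Filter Topology Finset

theorem dist_le_sum_range_of_dyadic_steps {α : Type*} [PseudoMetricSpace α] {g : ℕ → ℕ → α}
    {lam : ℕ → ℝ} (hrefine : ∀ r n, g (r + 1) (2 * n) = g r n)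
    (hstep : ∀ r n, n < 2 ^ r → dist (g (r + 1) (2 * n + 1)) (g (r + 1) (2 * n)) ≤ lam (r + 1)) :
    ∀ r n, n < 2 ^ r → dist (g r n) (g r 0) ≤ ∑ k ∈ range r, lam (k + 1) := by
  intro r
  induction r with
  | zero =>
    intro n hn
    obtain rfl : n = 0 := by omega
    simp
  | succ r ih =>
    intro n hn
    have hzero : g (r + 1) 0 = g r 0 := by simpa using hrefine r 0
    have hlam : 0 ≤ lam (r + 1) := dist_nonneg.trans (hstep r 0 (by positivity))
    rw [sum_range_succ, hzero]
    obtain ⟨m, rfl | rfl⟩ := Nat.even_or_odd' n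
    · have hm : m < 2 ^ r := by rw [pow_succ] at hn; omega
      rw [hrefine]
      linarith [ih m hm]
    · have hm : m < 2 ^ r := by rw [pow_succ] at hn; omega
      calc dist (g (r + 1) (2 * m + 1)) (g r 0)
          ≤ dist (g (r + 1) (2 * m + 1)) (g (r + 1) (2 * m)) + dist (g (r + 1) (2 * m)) (g r 0) :=
            dist_triangle _ _ _
        _ ≤ lam (r + 1) + ∑ k ∈ range r, lam (k + 1) := by
            exact add_le_add (hstep r m hm) (by rw [hrefine]; exact ih m hm)
        _ = _ := add_comm _ _

theorem exists_nat_lt_abs_sub_le_one {s : ℝ} {N : ℕ} (hs : 0 ≤ s) (hsN : s ≤ N) (hN : 0 < N) :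
    ∃ n < N, |s - n| ≤ 1 := by
  rcases hsN.lt_or_eq with hlt | rfl
  · refine ⟨⌊s⌋₊, (Nat.floor_lt hs).2 hlt, abs_le.2 ⟨?_, ?_⟩⟩
    · linarith [Nat.floor_le hs]
    · linarith [Nat.lt_floor_add_one s]
  · exact ⟨N - 1, by omega, by simp [Nat.cast_pred hN]⟩

section DyadicPoint

variable {a b σ : ℝ}

noncomputable def dyadicPoint (a b : ℝ) (r n : ℕ) : ℝ :=
  a + n * (b - a) / 2 ^ r

@[simp]
theorem dyadicPoint_zero (a b : ℝ) (r : ℕ) : dyadicPoint a b r 0 = a := by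
  simp [dyadicPoint]

theorem dyadicPoint_two_mul (a b : ℝ) (r n : ℕ) :
    dyadicPoint a b (r + 1) (2 * n) = dyadicPoint a b r n := by
  simp only [dyadicPoint, pow_succ]
  push_cast
  ring

theorem dyadicPoint_mem_Icc (hab : a ≤ b) {r n : ℕ} (hn : n ≤ 2 ^ r) :
    dyadicPoint a b r n ∈ Set.Icc a b := by
  have hba : 0 ≤ b - a := sub_nonneg.2 hab
  have hn' : (n : ℝ) ≤ 2 ^ r := by exact_mod_cast hn
  have hle : n * (b - a) / 2 ^ r ≤ b - a := by
    rw [div_le_iff₀ (by positivity)]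
    nlinarith
  have hnonneg : 0 ≤ n * (b - a) / 2 ^ r := by positivity
  exact ⟨by simp only [dyadicPoint]; linarith, by simp only [dyadicPoint]; linarith⟩

theorem exists_dyadicPoint_dist_le (hab : a < b) (hσ : σ ∈ Set.Icc a b) (r : ℕ) :
    ∃ n < 2 ^ r, dist σ (dyadicPoint a b r n) ≤ (b - a) / 2 ^ r := by
  have hba : 0 < b - a := sub_pos.2 hab
  have hmesh : 0 < (b - a) / 2 ^ r := by positivity
  set s := (σ - a) / ((b - a) / 2 ^ r)
  have hs : 0 ≤ s := div_nonneg (by linarith [hσ.1]) hmesh.le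
  have hs_le : s ≤ ((2 ^ r : ℕ) : ℝ) := by
    rw [div_le_iff₀ hmesh]
    push_cast
    field_simp
    linarith [hσ.2]
  obtain ⟨n, hn, hsn⟩ := exists_nat_lt_abs_sub_le_one hs hs_le (by positivity)
  refine ⟨n, hn, ?_⟩
  have hdiff : σ - dyadicPoint a b r n = (s - n) * ((b - a) / 2 ^ r) := by
    simp only [s, dyadicPoint]
    field_simp
    ring
  rw [Real.dist_eq, hdiff, abs_mul, abs_of_pos hmesh]
  exact mul_le_of_le_one_left hmesh.le hsn

theorem exists_seq_dyadicPoint_tendsto (hab : a < b) (hσ : σ ∈ Set.Icc a b) :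
    ∃ n : ℕ → ℕ, (∀ r, n r < 2 ^ r) ∧
      Tendsto (fun r => dyadicPoint a b r (n r)) atTop (𝓝 σ) := by
  choose n hn hdist using exists_dyadicPoint_dist_le hab hσ
  have hmesh : Tendsto (fun r : ℕ => (b - a) / 2 ^ r) atTop (𝓝 0) :=
    tendsto_const_nhds.div_atTop (tendsto_pow_atTop_atTop_of_one_lt one_lt_two)
  refine ⟨n, hn, tendsto_iff_dist_tendsto_zero.2 ?_⟩
  exact squeeze_zero (fun _ => dist_nonneg) (fun r => (dist_comm _ _).trans_le (hdist r)) hmesh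

end DyadicPoint

theorem stmt_16 (a b : ℝ) (hab : a < b) (F : ℝ → ℝ)
    (hF : ContinuousOn F (Set.Icc a b))
    (lam : ℕ → ℝ) (hlam : ∀ r, 0 ≤ lam r) (hsum : Summable lam)
    (hstep : ∀ r : ℕ, 1 ≤ r → ∀ n : ℕ, n < 2 ^ r →
      |F (a + ((n : ℝ) + 1) * (b - a) / 2 ^ r) - F (a + (n : ℝ) * (b - a) / 2 ^ r)| ≤ lam r) :
    ∀ σ ∈ Set.Icc a b, |F σ - F a| ≤ 2 * ∑' r : ℕ, lam (r + 1) := by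
  intro σ hσ
  have hstep' : ∀ r m, m < 2 ^ r → dist (F (dyadicPoint a b (r + 1) (2 * m + 1)))
      (F (dyadicPoint a b (r + 1) (2 * m))) ≤ lam (r + 1) := fun r m hm => by
    rw [Real.dist_eq, dyadicPoint, dyadicPoint, Nat.cast_succ]
    exact hstep (r + 1) (by omega) (2 * m) (by rw [pow_succ]; omega)
  have hchain := dist_le_sum_range_of_dyadic_steps
    (g := fun r m => F (dyadicPoint a b r m)) (fun r m => by rw [dyadicPoint_two_mul]) hstep'
  obtain ⟨n, hn, hlim⟩ := exists_seq_dyadicPoint_tendsto hab hσ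
  have hFlim : Tendsto (fun r => F (dyadicPoint a b r (n r))) atTop (𝓝 (F σ)) :=
    (hF σ hσ).tendsto.comp <| tendsto_nhdsWithin_iff.2
      ⟨hlim, Eventually.of_forall fun r => dyadicPoint_mem_Icc hab.le (hn r).le⟩
  have hbound : dist (F σ) (F a) ≤ ∑' k, lam (k + 1) := by
    refine le_of_tendsto' (hFlim.dist tendsto_const_nhds) fun r => ?_
    simpa using (hchain r (n r) (hn r)).trans
      (((summable_nat_add_iff 1).2 hsum).sum_le_tsum _ fun k _ => hlam (k + 1))
  have htsum : 0 ≤ ∑' k, lam (k + 1) := tsum_nonneg fun k => hlam (k + 1)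
  rw [← Real.dist_eq]
  linarith
end

section
/- Let 0 < ε < 2, δ = ε/2, γ > 0, and σ_ℓ = 1/2 + 1/(2 exp(ℓ^{1-δ})). Let V_ℓ = ∑_p p^{-2σ_ℓ}. Then the series ∑_{ℓ≥1} exp(-(1+γ)·V_ℓ^ε) converges. -/
open Real Filter

/-- The completely multiplicative function `n ↦ (n : ℝ) ^ (-s)`. -/
noncomputable def rpowHom (s : ℝ) (hs : 0 < s) : ℕ →*₀ ℝ where
  toFun n := (n : ℝ) ^ (-s)
  map_zero' := by
    simp [Real.zero_rpow (by linarith : -s ≠ 0)]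
  map_one' := by simp
  map_mul' m n := by
    push_cast
    exact Real.mul_rpow (Nat.cast_nonneg m) (Nat.cast_nonneg n)

lemma summable_rpow_neg {s : ℝ} (hs : 1 < s) :
    Summable (fun n : ℕ => (n : ℝ) ^ (-s)) :=
  Real.summable_nat_rpow.mpr (by linarith)

lemma prime_rpow_lt_one {s : ℝ} (hs : 1 < s) (p : Nat.Primes) :
    (p : ℝ) ^ (-s) < 1 := by
  have h1 : (1 : ℝ) < (p : ℕ) := by exact_mod_cast p.prop.one_lt
  exact Real.rpow_lt_one_of_one_lt_of_neg h1 (by linarith)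

/-- Real Euler product in exp-log form. -/
lemma exp_tsum_primes_eq {s : ℝ} (hs : 1 < s) :
    Real.exp (∑' p : Nat.Primes, -Real.log (1 - (p : ℝ) ^ (-s))) =
      ∑' n : ℕ, (n : ℝ) ^ (-s) := by
  have hs0 : 0 < s := by linarith
  set f : ℕ →*₀ ℂ := (Complex.ofRealHom : ℝ →+* ℂ).toMonoidWithZeroHom.comp (rpowHom s hs0)
    with hfdef
  have hf : ∀ n : ℕ, f n = (((n : ℝ) ^ (-s) : ℝ) : ℂ) := fun n => rfl
  have hsum : Summable (fun n => ‖f n‖) := by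
    have he : (fun n => ‖f n‖) = fun n : ℕ => (n : ℝ) ^ (-s) := by
      funext n
      rw [hf, Complex.norm_real, Real.norm_eq_abs,
        abs_of_nonneg (Real.rpow_nonneg (Nat.cast_nonneg n) _)]
    rw [he]
    exact summable_rpow_neg hs
  have H := EulerProduct.exp_tsum_primes_log_eq_tsum (f := f) hsum
  have key : ∀ p : Nat.Primes,
      -Complex.log (1 - f p) = ((-Real.log (1 - (p : ℝ) ^ (-s)) : ℝ) : ℂ) := by
    intro p
    have hnn : (0:ℝ) ≤ 1 - (p : ℝ) ^ (-s) := by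
      have := prime_rpow_lt_one hs p; linarith
    have h1 : (1 : ℂ) - f p = (((1 - (p : ℝ) ^ (-s) : ℝ)) : ℂ) := by
      rw [hf]; push_cast; ring
    rw [h1, ← Complex.ofReal_log hnn, ← Complex.ofReal_neg]
  rw [tsum_congr key, ← Complex.ofReal_tsum, ← Complex.ofReal_exp] at H
  have H2 : (((∑' n : ℕ, (n : ℝ) ^ (-s) : ℝ)) : ℂ) = ∑' n : ℕ, f n := by
    rw [Complex.ofReal_tsum]
    exact tsum_congr fun n => (hf n).symm
  rw [← H2] at H
  exact_mod_cast H

lemma neg_log_one_sub_le {x : ℝ} (h0 : 0 ≤ x) (h2 : x ≤ 1/2) :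
    -Real.log (1 - x) ≤ 2 * x := by
  have hx1 : 0 < 1 - x := by linarith
  rw [neg_le, Real.le_log_iff_exp_le hx1]
  have h1 : 1 + 2*x ≤ Real.exp (2*x) := by
    have := Real.add_one_le_exp (2*x); linarith
  have h2' : Real.exp (-(2*x)) ≤ (1 + 2*x)⁻¹ := by
    rw [Real.exp_neg]
    exact inv_anti₀ (by linarith) h1
  have h3 : (1 + 2*x)⁻¹ ≤ 1 - x := by
    rw [inv_le_iff_one_le_mul₀ (by linarith)]
    nlinarith
  exact h2'.trans h3

lemma nonneg_neg_log {s : ℝ} (hs : 1 < s) (p : Nat.Primes) :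
    0 ≤ -Real.log (1 - (p : ℝ) ^ (-s)) := by
  have h1 := prime_rpow_lt_one hs p
  have h0 : (0:ℝ) ≤ (p : ℝ) ^ (-s) := Real.rpow_nonneg (Nat.cast_nonneg _) _
  have : Real.log (1 - (p : ℝ) ^ (-s)) ≤ 0 :=
    Real.log_nonpos (by linarith) (by linarith)
  linarith

lemma prime_rpow_le_half {s : ℝ} (hs : 1 < s) (p : Nat.Primes) :
    (p : ℝ) ^ (-s) ≤ 1/2 := by
  have h2 : (2:ℝ) ≤ (p : ℕ) := by exact_mod_cast p.prop.two_le
  have hb : (p : ℝ) ^ (-s) ≤ (2:ℝ) ^ (-s) :=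
    Real.rpow_le_rpow_of_nonpos two_pos h2 (by linarith)
  have hc : (2:ℝ) ^ (-s) ≤ (2:ℝ) ^ (-1:ℝ) :=
    Real.rpow_le_rpow_of_exponent_le one_le_two (by linarith)
  rw [Real.rpow_neg_one] at hc
  norm_num at hc
  linarith

/-- log of the zeta sum is at most twice the prime sum. -/
lemma log_zeta_le {s : ℝ} (hs : 1 < s) :
    Real.log (∑' n : ℕ, (n : ℝ) ^ (-s)) ≤ 2 * ∑' p : Nat.Primes, (p : ℝ) ^ (-s) := by
  have h1 : Real.log (∑' n : ℕ, (n:ℝ)^(-s))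
      = ∑' p : Nat.Primes, -Real.log (1 - (p:ℝ)^(-s)) := by
    rw [← exp_tsum_primes_eq hs, Real.log_exp]
  rw [h1]
  have hsumP : Summable (fun p : Nat.Primes => (p:ℝ)^(-s)) :=
    (summable_rpow_neg hs).subtype _
  have hle : ∀ p : Nat.Primes, -Real.log (1 - (p:ℝ)^(-s)) ≤ 2 * (p:ℝ)^(-s) := fun p =>
    neg_log_one_sub_le (Real.rpow_nonneg (Nat.cast_nonneg _) _) (prime_rpow_le_half hs p)
  have hG : Summable (fun p : Nat.Primes => -Real.log (1 - (p:ℝ)^(-s))) :=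
    Summable.of_nonneg_of_le (nonneg_neg_log hs) hle (hsumP.mul_left 2)
  calc ∑' p : Nat.Primes, -Real.log (1 - (p:ℝ)^(-s))
      ≤ ∑' p : Nat.Primes, 2*(p:ℝ)^(-s) := Summable.tsum_le_tsum hle hG (hsumP.mul_left 2)
    _ = 2 * ∑' p : Nat.Primes, (p:ℝ)^(-s) := tsum_mul_left

/-- Lower bound for the zeta sum. -/
lemma log_zeta_ge {η : ℝ} (h0 : 0 < η) (h1 : η ≤ 1) :
    Real.log (1/η) - 2 ≤ Real.log (∑' n : ℕ, (n : ℝ) ^ (-(1 + η))) := by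
  have hs : (1:ℝ) < 1 + η := by linarith
  set N := ⌈Real.exp (1/η)⌉₊ with hNdef
  have hNge : Real.exp (1/η) ≤ (N:ℝ) := Nat.le_ceil _
  have hNle : (N:ℝ) ≤ Real.exp (1/η) + 1 := (Nat.ceil_lt_add_one (Real.exp_pos _).le).le
  have hN0 : (0:ℝ) < (N:ℝ) := lt_of_lt_of_le (Real.exp_pos _) hNge
  have key : ∀ i ∈ Finset.range N,
      (Real.log ((i:ℝ)+2) - Real.log ((i:ℝ)+1)) * (N:ℝ)^(-η) ≤ ((i+1:ℕ):ℝ)^(-(1+η)) := by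
    intro i hi
    have hi' : (i:ℝ) + 1 ≤ (N:ℝ) := by
      have h := Finset.mem_range.mp hi
      exact_mod_cast Nat.succ_le_of_lt h
    have hp0 : (0:ℝ) < (i:ℝ)+1 := by positivity
    have hlog : Real.log ((i:ℝ)+2) - Real.log ((i:ℝ)+1) ≤ 1/((i:ℝ)+1) := by
      rw [← Real.log_div (by positivity) (by positivity)]
      have h2 := Real.log_le_sub_one_of_pos
        (x := ((i:ℝ)+2)/((i:ℝ)+1)) (by positivity)
      have heq : ((i:ℝ)+2)/((i:ℝ)+1) - 1 = 1/((i:ℝ)+1) := by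
        field_simp
        norm_num
      linarith
    have hmono : (N:ℝ)^(-η) ≤ ((i:ℝ)+1)^(-η) :=
      Real.rpow_le_rpow_of_nonpos hp0 hi' (by linarith)
    have hsplit : ((i+1:ℕ):ℝ)^(-(1+η)) = (1/((i:ℝ)+1)) * ((i:ℝ)+1)^(-η) := by
      push_cast
      rw [show -(1+η) = (-1) + (-η) by ring, Real.rpow_add hp0, Real.rpow_neg_one]
      ring
    rw [hsplit]
    exact mul_le_mul hlog hmono (Real.rpow_nonneg hN0.le _) (by positivity)
  have hsum_left : ∑ i ∈ Finset.range N, (Real.log ((i:ℝ)+2) - Real.log ((i:ℝ)+1))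
      = Real.log ((N:ℝ)+1) := by
    have h := Finset.sum_range_sub (f := fun i : ℕ => Real.log ((i:ℝ)+1)) N
    have h2 : ∑ i ∈ Finset.range N, (Real.log ((i:ℝ)+2) - Real.log ((i:ℝ)+1))
        = ∑ i ∈ Finset.range N,
          (Real.log (((i+1:ℕ):ℝ)+1) - Real.log ((i:ℝ)+1)) := by
      refine Finset.sum_congr rfl fun i _ => ?_
      push_cast; ring_nf
    rw [h2, h]
    norm_num
  have hsummable : Summable (fun n : ℕ => (n:ℝ)^(-(1+η))) := summable_rpow_neg hs
  have hshift : Summable (fun i : ℕ => ((i+1:ℕ):ℝ)^(-(1+η))) :=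
    (summable_nat_add_iff 1).mpr hsummable
  have hZ : ∑ i ∈ Finset.range N, ((i+1:ℕ):ℝ)^(-(1+η)) ≤ ∑' n : ℕ, (n:ℝ)^(-(1+η)) := by
    have h1 : ∑' n : ℕ, (n:ℝ)^(-(1+η)) = ∑' i : ℕ, ((i+1:ℕ):ℝ)^(-(1+η)) := by
      rw [Summable.tsum_eq_zero_add hsummable]
      have : ((0:ℕ):ℝ)^(-(1+η)) = 0 := by
        rw [Nat.cast_zero, Real.zero_rpow (by linarith : -(1+η) ≠ 0)]
      rw [this, zero_add]
    rw [h1]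
    exact Summable.sum_le_tsum _ (fun i _ => Real.rpow_nonneg (Nat.cast_nonneg _) _) hshift
  have hS : Real.log ((N:ℝ)+1) * (N:ℝ)^(-η) ≤ ∑' n : ℕ, (n:ℝ)^(-(1+η)) :=
    calc Real.log ((N:ℝ)+1) * (N:ℝ)^(-η)
        = ∑ i ∈ Finset.range N,
            (Real.log ((i:ℝ)+2) - Real.log ((i:ℝ)+1)) * (N:ℝ)^(-η) := by
          rw [← Finset.sum_mul, hsum_left]
      _ ≤ ∑ i ∈ Finset.range N, ((i+1:ℕ):ℝ)^(-(1+η)) := Finset.sum_le_sum key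
      _ ≤ _ := hZ
  have hlogN1 : 1/η ≤ Real.log ((N:ℝ)+1) := by
    rw [Real.le_log_iff_exp_le (by positivity)]
    linarith
  have hposL : 0 < Real.log ((N:ℝ)+1) := lt_of_lt_of_le (by positivity) hlogN1
  have hfinal : Real.log (1/η) - 2 ≤ Real.log (Real.log ((N:ℝ)+1) * (N:ℝ)^(-η)) := by
    rw [Real.log_mul hposL.ne' (Real.rpow_pos_of_pos hN0 _).ne', Real.log_rpow hN0]
    have hA : Real.log (1/η) ≤ Real.log (Real.log ((N:ℝ)+1)) :=
      Real.log_le_log (by positivity) hlogN1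
    have hB : Real.log (N:ℝ) ≤ 1/η + 1 := by
      have hexp2 : (N:ℝ) ≤ Real.exp (1/η + 1) := by
        have h2 : Real.exp (1/η) + 1 ≤ 2 * Real.exp (1/η) := by
          have := Real.one_le_exp (by positivity : (0:ℝ) ≤ 1/η); linarith
        have h3 : 2 * Real.exp (1/η) ≤ Real.exp (1/η + 1) := by
          rw [Real.exp_add]
          have he1 : (2:ℝ) ≤ Real.exp 1 := by
            have := Real.add_one_le_exp 1; linarith
          nlinarith [Real.exp_pos (1/η)]
        linarith
      calc Real.log (N:ℝ) ≤ Real.log (Real.exp (1/η+1)) := Real.log_le_log hN0 hexp2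
        _ = 1/η + 1 := Real.log_exp _
    have hC : η * Real.log (N:ℝ) ≤ 2 := by
      have h4 := mul_le_mul_of_nonneg_left hB h0.le
      have h5 : η * (1/η + 1) = 1 + η := by field_simp
      linarith
    linarith
  have hpos : 0 < Real.log ((N:ℝ)+1) * (N:ℝ)^(-η) :=
    mul_pos hposL (Real.rpow_pos_of_pos hN0 _)
  exact hfinal.trans (Real.log_le_log hpos hS)

lemma prime_sum_ge {η : ℝ} (h0 : 0 < η) (h1 : η ≤ 1) :
    (Real.log (1/η) - 2) / 2 ≤ ∑' p : Nat.Primes, (p : ℝ) ^ (-(1 + η)) := by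
  have hs : (1:ℝ) < 1 + η := by linarith
  have := (log_zeta_ge h0 h1).trans (log_zeta_le hs)
  linarith

theorem stmt_17 (ε δ γ : ℝ) (hε0 : 0 < ε) (hε2 : ε < 2) (hδ : δ = ε / 2) (hγ : 0 < γ) :
    Summable (fun ℓ : ℕ =>
      Real.exp (-(1 + γ) *
        (∑' p : Nat.Primes,
          (p : ℝ) ^ (-(2 * (1/2 + 1/(2 * Real.exp (((ℓ + 1 : ℕ) : ℝ) ^ (1 - δ))))))) ^ ε)) := by
  have hδ1 : 0 < 1 - δ := by rw [hδ]; linarith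
  set β := (1 - δ) * ε with hβdef
  have hβ : 0 < β := by positivity
  set A : ℕ → ℝ := fun ℓ => ((ℓ + 1 : ℕ) : ℝ) ^ (1 - δ) with hAdef
  set V : ℕ → ℝ := fun ℓ => ∑' p : Nat.Primes, (p:ℝ) ^ (-(1 + Real.exp (-(A ℓ)))) with hVdef
  have hL1 : ∀ ℓ : ℕ, (1:ℝ) ≤ ((ℓ + 1 : ℕ) : ℝ) := by
    intro ℓ; exact_mod_cast Nat.one_le_iff_ne_zero.mpr (Nat.succ_ne_zero ℓ)
  have hA1 : ∀ ℓ : ℕ, 1 ≤ A ℓ := by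
    intro ℓ
    calc (1:ℝ) = 1 ^ (1 - δ) := (Real.one_rpow _).symm
      _ ≤ ((ℓ + 1 : ℕ) : ℝ) ^ (1 - δ) :=
        Real.rpow_le_rpow zero_le_one (hL1 ℓ) hδ1.le
  have hexp : ∀ a : ℝ, ∀ p : Nat.Primes,
      (p:ℝ) ^ (-(2 * (1/2 + 1/(2 * Real.exp a)))) = (p:ℝ) ^ (-(1 + Real.exp (-a))) := by
    intro a p
    congr 1
    rw [Real.exp_neg]
    have hE := (Real.exp_pos a).ne'
    field_simp
  have hVeq : ∀ ℓ : ℕ, (∑' p : Nat.Primes,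
      (p : ℝ) ^ (-(2 * (1/2 + 1/(2 * Real.exp (((ℓ + 1 : ℕ) : ℝ) ^ (1 - δ))))))) = V ℓ :=
    fun ℓ => tsum_congr fun p => hexp (A ℓ) p
  have hVlb : ∀ ℓ : ℕ, (A ℓ - 2) / 2 ≤ V ℓ := by
    intro ℓ
    have hη0 : 0 < Real.exp (-(A ℓ)) := Real.exp_pos _
    have hη1 : Real.exp (-(A ℓ)) ≤ 1 := by
      rw [Real.exp_le_one_iff]; linarith [hA1 ℓ]
    have h := prime_sum_ge hη0 hη1
    have hlog : Real.log (1 / Real.exp (-(A ℓ))) = A ℓ := by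
      rw [one_div, ← Real.exp_neg, neg_neg, Real.log_exp]
    rw [hlog] at h
    exact h
  -- comparison with a p-series
  have hgsum : Summable (fun ℓ : ℕ => ((ℓ + 1 : ℕ) : ℝ) ^ (-(2:ℝ))) :=
    (summable_nat_add_iff 1).mpr (Real.summable_nat_rpow.mpr (by norm_num))
  apply summable_of_isBigO_nat hgsum
  apply Asymptotics.IsBigO.of_bound 1
  -- eventual bounds
  have htend : Filter.Tendsto (fun ℓ : ℕ => ((ℓ + 1 : ℕ) : ℝ)) atTop atTop := by
    have : Filter.Tendsto (fun ℓ : ℕ => ((ℓ:ℝ) + 1)) atTop atTop :=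
      tendsto_atTop_add_const_right _ 1 tendsto_natCast_atTop_atTop
    simpa using this
  have hE1 : ∀ᶠ ℓ : ℕ in atTop, 4 ≤ A ℓ :=
    ((tendsto_rpow_atTop hδ1).comp htend).eventually_ge_atTop 4
  have hc : (0:ℝ) < (1 + γ)/2 * (4:ℝ)^(-ε) := by positivity
  have hE2 : ∀ᶠ ℓ : ℕ in atTop,
      ‖Real.log (((ℓ + 1 : ℕ) : ℝ))‖ ≤
        (1 + γ)/2 * (4:ℝ)^(-ε) * ‖(((ℓ + 1 : ℕ) : ℝ)) ^ β‖ :=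
    htend.eventually ((isLittleO_log_rpow_atTop hβ).bound hc)
  filter_upwards [hE1, hE2] with ℓ h4 hlog
  set L : ℝ := ((ℓ + 1 : ℕ) : ℝ) with hLdef
  have hL0 : (0:ℝ) < L := lt_of_lt_of_le one_pos (hL1 ℓ)
  have hlogL : Real.log L ≤ (1 + γ)/2 * (4:ℝ)^(-ε) * L ^ β := by
    rw [Real.norm_eq_abs, Real.norm_eq_abs,
      abs_of_nonneg (Real.log_nonneg (hL1 ℓ)),
      abs_of_nonneg (Real.rpow_nonneg hL0.le _)] at hlog
    exact hlog
  -- lower bound on V ^ ε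
  have hAV : A ℓ / 4 ≤ V ℓ := by
    have := hVlb ℓ; linarith
  have hA4 : (0:ℝ) ≤ A ℓ / 4 := by linarith [hA1 ℓ]
  have hVpow : (A ℓ / 4) ^ ε ≤ (V ℓ) ^ ε := Real.rpow_le_rpow hA4 hAV hε0.le
  have hApow : (A ℓ / 4) ^ ε = (4:ℝ)^(-ε) * L ^ β := by
    have hA0 : (0:ℝ) ≤ A ℓ := by linarith [hA1 ℓ]
    rw [div_eq_mul_inv, Real.mul_rpow hA0 (by norm_num),
      Real.inv_rpow (by norm_num : (0:ℝ) ≤ 4), ← Real.rpow_neg (by norm_num : (0:ℝ) ≤ 4),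
      show A ℓ = L ^ (1-δ) from rfl, ← Real.rpow_mul hL0.le]
    ring
  have hkey : 2 * Real.log L ≤ (1 + γ) * (V ℓ) ^ ε := by
    have h6 : (1 + γ) * ((A ℓ / 4) ^ ε) ≤ (1 + γ) * (V ℓ) ^ ε :=
      mul_le_mul_of_nonneg_left hVpow (by linarith)
    rw [hApow] at h6
    nlinarith [Real.rpow_nonneg hL0.le β, Real.rpow_nonneg (by norm_num : (0:ℝ) ≤ 4) (-ε)]
  -- conclude
  rw [hVeq ℓ]
  have hfin : Real.exp (-(1 + γ) * (V ℓ) ^ ε) ≤ L ^ (-(2:ℝ)) := by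
    rw [Real.rpow_def_of_pos hL0]
    apply Real.exp_le_exp.mpr
    nlinarith
  rw [Real.norm_eq_abs, Real.norm_eq_abs, abs_of_pos (Real.exp_pos _),
    abs_of_nonneg (Real.rpow_nonneg hL0.le _), one_mul]
  exact hfin
end
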